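/- arXiv:2602.22980 — 5 statements merged into one kernel-verified Lean document; each statement's English description precedes it below -/
import Mathlib

section
/- For every graph G and every edge e of G, the isolation number of the graph obtained by subdividing e satisfies ι(G) ≤ ι(G_e) ≤ ι(G) + 1. -/
open SimpleGraph

/-- `v` lies in the closed neighbourhood of the set `D`. -/
def inClosedNbhd {V : Type*} (G : SimpleGraph V) (D : Set V) (v : V) : Prop :=
  ∃ d ∈ D, d = v ∨ G.Adj d v

/-- `D` is an isolating set of `G`: the graph induced on the vertices outside
`N[D]` has no edges. -/
def IsIsolating {V : Type*} (G : SimpleGraph V) (D : Set V) : Prop :=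
  ∀ u v : V, G.Adj u v → inClosedNbhd G D u ∨ inClosedNbhd G D v

/-- The isolation number of a finite graph. -/
noncomputable def iso {V : Type*} (G : SimpleGraph V) [Fintype V] : ℕ :=
  sInf {n | ∃ D : Finset V, D.card = n ∧ IsIsolating G ↑D}

/-- The graph obtained from `G` by subdividing each edge in `A` once; the new
(subdivision) vertices are the elements of `A`. -/
def subdivide {V : Type*} (G : SimpleGraph V) (A : Finset (Sym2 V)) :
    SimpleGraph (V ⊕ {e : Sym2 V // e ∈ A}) where
  Adj x y :=
    match x, y with
    | Sum.inl u, Sum.inl v => G.Adj u v ∧ s(u, v) ∉ A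
    | Sum.inl u, Sum.inr e => u ∈ (e : Sym2 V)
    | Sum.inr e, Sum.inl u => u ∈ (e : Sym2 V)
    | Sum.inr _, Sum.inr _ => False
  symm := by
    constructor
    rintro (u | e) (v | f) h <;> dsimp only at h ⊢ <;>
      first
        | exact ⟨h.1.symm, by rw [Sym2.eq_swap]; exact h.2⟩
        | exact h
        | exact h.elim
  loopless := by
    constructor
    rintro (u | e) h <;> dsimp only at h <;>
      first
        | exact G.loopless.irrefl u h.1
        | exact h

/-- A graph is `(ι,q)`-critical. -/
def IotaCritical {V : Type*} (G : SimpleGraph V) [Fintype V] (q : ℕ) : Prop :=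
  (∀ A : Finset (Sym2 V), ↑A ⊆ G.edgeSet → A.card = q →
      iso G < iso (subdivide G A)) ∧
  (∃ A : Finset (Sym2 V), ↑A ⊆ G.edgeSet ∧ A.card = q - 1 ∧
      iso (subdivide G A) = iso G)

/-! Sending each subdivision vertex to an endpoint of its edge maps an isolating set of the
subdivided graph onto one of `G` of no larger size: a subdivided edge `uv` is covered because the
edge from `u` to its subdivision vertex is. Conversely, an isolating set of `G` together with all
subdivision vertices isolates the subdivided graph, since every subdivided edge of `G` that was
covered through a neighbour `d` is now covered by its subdivision vertex. -/

section Isolation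

variable {V : Type*}

lemma inClosedNbhd_of_mem_edge {G : SimpleGraph V} {D : Set V} {e : Sym2 V} {d u : V}
    (he : e ∈ G.edgeSet) (hd : d ∈ D) (hde : d ∈ e) (hue : u ∈ e) : inClosedNbhd G D u := by
  induction e using Sym2.ind with
  | _ a b =>
    rw [mem_edgeSet] at he
    refine ⟨d, hd, ?_⟩
    rcases Sym2.mem_iff.1 hde with rfl | rfl <;> rcases Sym2.mem_iff.1 hue with rfl | rfl <;>
      simp [he, he.symm]

lemma isIsolating_univ (G : SimpleGraph V) : IsIsolating G Set.univ :=
  fun u _ _ => Or.inl ⟨u, Set.mem_univ u, Or.inl rfl⟩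

section Iso

variable [Fintype V] {G : SimpleGraph V}

lemma iso_le_card {D : Finset V} (hD : IsIsolating G ↑D) : iso G ≤ D.card :=
  Nat.sInf_le ⟨D, rfl, hD⟩

lemma exists_isIsolating_card_eq_iso (G : SimpleGraph V) :
    ∃ D : Finset V, D.card = iso G ∧ IsIsolating G ↑D :=
  Nat.sInf_mem (s := {n | ∃ D : Finset V, D.card = n ∧ IsIsolating G ↑D})
    ⟨_, Finset.univ, rfl, by simpa using isIsolating_univ G⟩

end Iso

section Subdivide

variable {G : SimpleGraph V} {A : Finset (Sym2 V)}

lemma subdivide_adj_inl_inl {u v : V} :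
    (subdivide G A).Adj (Sum.inl u) (Sum.inl v) ↔ G.Adj u v ∧ s(u, v) ∉ A :=
  Iff.rfl

lemma subdivide_adj_inl_inr {u : V} {e : {e : Sym2 V // e ∈ A}} :
    (subdivide G A).Adj (Sum.inl u) (Sum.inr e) ↔ u ∈ (e : Sym2 V) :=
  Iff.rfl

noncomputable def subdivideContract (A : Finset (Sym2 V)) : V ⊕ {e : Sym2 V // e ∈ A} → V :=
  Sum.elim id fun e => (e : Sym2 V).out.1

lemma subdivideContract_inr_mem (e : {e : Sym2 V // e ∈ A}) :
    subdivideContract A (Sum.inr e) ∈ (e : Sym2 V) :=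
  Sym2.out_fst_mem _

lemma inClosedNbhd_image_subdivideContract (hA : ↑A ⊆ G.edgeSet)
    {D' : Set (V ⊕ {e : Sym2 V // e ∈ A})} {u : V}
    (hu : inClosedNbhd (subdivide G A) D' (Sum.inl u)) :
    inClosedNbhd G (subdivideContract A '' D') u := by
  obtain ⟨d', hd', hd'u⟩ := hu
  have hcd' : subdivideContract A d' ∈ subdivideContract A '' D' := Set.mem_image_of_mem _ hd'
  rcases d' with x | e
  · rcases hd'u with hxu | hxu
    · exact ⟨x, hcd', Or.inl (Sum.inl.inj hxu)⟩
    · exact ⟨x, hcd', Or.inr (subdivide_adj_inl_inl.1 hxu).1⟩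
  · rcases hd'u with hxu | hue
    · exact (Sum.inr_ne_inl hxu).elim
    · exact inClosedNbhd_of_mem_edge (hA e.2) hcd' (subdivideContract_inr_mem e) hue

lemma IsIsolating.image_subdivideContract (hA : ↑A ⊆ G.edgeSet)
    {D' : Set (V ⊕ {e : Sym2 V // e ∈ A})} (hD' : IsIsolating (subdivide G A) D') :
    IsIsolating G (subdivideContract A '' D') := by
  intro u v huv
  by_cases he : s(u, v) ∈ A
  · rcases hD' (Sum.inl u) (Sum.inr ⟨s(u, v), he⟩) (Sym2.mem_mk_left u v) with
      hu | ⟨d', hd', hd'w⟩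
    · exact Or.inl (inClosedNbhd_image_subdivideContract hA hu)
    · have hcd' : subdivideContract A d' ∈ s(u, v) := by
        rcases hd'w with rfl | hadj
        · exact subdivideContract_inr_mem _
        · rcases d' with x | _
          · exact subdivide_adj_inl_inr.1 hadj
          · exact hadj.elim
      exact Or.inl (inClosedNbhd_of_mem_edge huv (Set.mem_image_of_mem _ hd') hcd'
        (Sym2.mem_mk_left u v))
  · exact (hD' _ _ (subdivide_adj_inl_inl.2 ⟨huv, he⟩)).imp
      (inClosedNbhd_image_subdivideContract hA) (inClosedNbhd_image_subdivideContract hA)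

lemma inClosedNbhd_disjSum_attach {D : Finset V} {u : V} (hu : inClosedNbhd G ↑D u) :
    inClosedNbhd (subdivide G A) ↑(D.disjSum A.attach) (Sum.inl u) := by
  obtain ⟨d, hd, rfl | hdu⟩ := hu
  · exact ⟨Sum.inl d, Finset.inl_mem_disjSum.2 hd, Or.inl rfl⟩
  · by_cases he : s(d, u) ∈ A
    · exact ⟨Sum.inr ⟨s(d, u), he⟩, by simp, Or.inr (Sym2.mem_mk_right d u)⟩
    · exact ⟨Sum.inl d, Finset.inl_mem_disjSum.2 hd,
        Or.inr (subdivide_adj_inl_inl.2 ⟨hdu, he⟩)⟩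

lemma IsIsolating.disjSum_attach {D : Finset V} (hD : IsIsolating G ↑D) :
    IsIsolating (subdivide G A) ↑(D.disjSum A.attach) := by
  rintro (u | e) (v | f) huv
  · exact (hD u v (subdivide_adj_inl_inl.1 huv).1).imp
      inClosedNbhd_disjSum_attach inClosedNbhd_disjSum_attach
  · exact Or.inr ⟨Sum.inr f, by simp, Or.inl rfl⟩
  · exact Or.inl ⟨Sum.inr e, by simp, Or.inl rfl⟩
  · exact huv.elim

variable [Fintype V]

theorem iso_le_iso_subdivide (hA : ↑A ⊆ G.edgeSet) : iso G ≤ iso (subdivide G A) := by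
  classical
  obtain ⟨D', hD'card, hD'⟩ := exists_isIsolating_card_eq_iso (subdivide G A)
  calc iso G ≤ (D'.image (subdivideContract A)).card :=
        iso_le_card (by simpa using hD'.image_subdivideContract hA)
    _ ≤ D'.card := Finset.card_image_le
    _ = iso (subdivide G A) := hD'card

theorem iso_subdivide_le_iso_add_card (G : SimpleGraph V) (A : Finset (Sym2 V)) :
    iso (subdivide G A) ≤ iso G + A.card := by
  obtain ⟨D, hDcard, hD⟩ := exists_isIsolating_card_eq_iso G
  calc iso (subdivide G A) ≤ (D.disjSum A.attach).card := iso_le_card hD.disjSum_attach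
    _ = iso G + A.card := by rw [Finset.card_disjSum, hDcard, Finset.card_attach]

end Subdivide

end Isolation

theorem stmt0 {V : Type*} [Fintype V] (G : SimpleGraph V) (e : Sym2 V)
    (he : e ∈ G.edgeSet) :
    iso G ≤ iso (subdivide G {e}) ∧ iso (subdivide G {e}) ≤ iso G + 1 :=
  ⟨iso_le_iso_subdivide (by simpa using he), iso_subdivide_le_iso_add_card G {e}⟩
end

section
/- If G is a cycle on n ≥ 3 vertices, then the isolation subdivision number sd_ι(G) equals 1 if n ≡ 0 (mod 4), 2 if n ≡ 3 (mod 4), 3 if n ≡ 2 (mod 4), and 4 if n ≡ 1 (mod 4). -/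
open SimpleGraph

/-- The isolation subdivision number of a graph. -/
noncomputable def sdi {V : Type*} (G : SimpleGraph V) [Fintype V] : ℕ :=
  sInf {k | ∃ A : Finset (Sym2 V), ↑A ⊆ G.edgeSet ∧ A.card = k ∧
    iso G < iso (subdivide G A)}

/-!
An isolating set `D` of a cycle must contain, for every edge `{j, j + 1}`, an endpoint within
distance one of `D`; hence every `j` lies in `{d - 2, d - 1, d, d + 1}` for some `d ∈ D`, and
`ι(Cₘ) ≥ m / 4`. Every fourth vertex is an isolating set, so `ι(Cₘ) = ⌈m / 4⌉`.

Subdividing `k` edges of `Cₙ` gives a graph isomorphic to `Cₙ₊ₖ`: give the old vertex `u` the key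
`2u` and the new vertex on `{j, j + 1}` the key `2j + 1`; listed by increasing key, consecutive
vertices are adjacent, and so are the last and the first. So `sd_ι(Cₙ)` is the least `k ≥ 1` with
`⌈(n + k) / 4⌉ > ⌈n / 4⌉`, which depends only on `n mod 4`.
-/

open Finset Fin.NatCast Fin.CommRing

theorem Fin.val_add_one_eq_or {n : ℕ} [NeZero n] (u : Fin n) :
    ((u + 1 : Fin n) : ℕ) = u + 1 ∨ (u : ℕ) + 1 = n ∧ u + 1 = 0 := by
  rcases (show (u : ℕ) + 1 ≤ n from u.isLt).lt_or_eq with h | h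
  · exact .inl (Fin.val_add_one_of_lt' h)
  · refine .inr ⟨h, Fin.ext ?_⟩
    rw [Fin.val_add, Fin.val_one', Nat.add_mod_mod, h, Nat.mod_self, Fin.val_zero]

section KeyRank

variable {W : Type*} [Fintype W] {key : W → ℕ}

variable (key) in
def keyRank (x : W) : ℕ := #{y | key y < key x}

theorem keyRank_lt_card (x : W) : keyRank key x < Fintype.card W :=
  card_lt_univ_of_notMem (x := x) (by simp)

theorem keyRank_lt_keyRank {x y : W} (h : key x < key y) : keyRank key x < keyRank key y :=
  card_lt_card ⟨fun z hz => mem_filter.2 ⟨mem_univ z, (mem_filter.1 hz).2.trans h⟩, fun hsub => by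
    simpa using hsub (mem_filter.2 ⟨mem_univ x, h⟩)⟩

theorem keyRank_injective (hkey : Function.Injective key) : Function.Injective (keyRank key) := by
  intro x y hxy
  rcases lt_trichotomy (key x) (key y) with h | h | h
  · exact absurd hxy (keyRank_lt_keyRank h).ne
  · exact hkey h
  · exact absurd hxy (keyRank_lt_keyRank h).ne'

theorem keyRank_eq_add_one (hkey : Function.Injective key) {x y : W} (hxy : key x < key y)
    (hgap : ∀ z, key x < key z → key y ≤ key z) : keyRank key y = keyRank key x + 1 := by
  classical
  have : univ.filter (fun z => key z < key y) = insert x (univ.filter fun z => key z < key x) := by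
    ext z
    simp only [mem_filter, mem_univ, true_and, mem_insert]
    constructor
    · intro hz
      rcases lt_trichotomy (key z) (key x) with h | h | h
      · exact .inr h
      · exact .inl (hkey h)
      · exact absurd (hgap z h) hz.not_ge
    · rintro (rfl | hz)
      exacts [hxy, hz.trans hxy]
  rw [keyRank, this, card_insert_of_notMem (by simp)]
  rfl

theorem keyRank_eq_zero {x : W} (hx : ∀ z, key x ≤ key z) : keyRank key x = 0 := by
  simp only [keyRank, card_eq_zero, filter_eq_empty_iff, mem_univ, true_implies, not_lt]
  exact hx

theorem keyRank_add_one_eq_card (hkey : Function.Injective key) {x : W}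
    (hx : ∀ z, key z ≤ key x) : keyRank key x + 1 = Fintype.card W := by
  classical
  have : univ.filter (fun z => key z < key x) = univ.erase x := by
    ext z
    simp only [mem_filter, mem_univ, true_and, mem_erase, and_true]
    exact ⟨fun h h' => h.ne (congrArg key h'), fun h => (hx z).lt_of_ne fun h' => h (hkey h')⟩
  rw [keyRank, this, card_erase_of_mem (mem_univ x), card_univ]
  have := Fintype.card_pos_iff.2 ⟨x⟩
  omega

end KeyRank

section Isolation

variable {V W : Type*}

theorem IsIsolating.map {G : SimpleGraph V} {H : SimpleGraph W} (e : G ≃g H) {D : Finset V}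
    (hD : IsIsolating G ↑D) : IsIsolating H ↑(D.map e.toEquiv.toEmbedding) := by
  have hN : ∀ {v}, inClosedNbhd G ↑D v → inClosedNbhd H ↑(D.map e.toEquiv.toEmbedding) (e v) := by
    rintro v ⟨d, hd, hdv⟩
    refine ⟨e d, by simpa [mem_map_equiv] using hd, hdv.imp (congrArg e) e.map_adj_iff.2⟩
  intro u v huv
  simpa using (hD (e.symm u) (e.symm v) (e.symm.map_adj_iff.2 huv)).imp hN hN

theorem iso_congr [Fintype V] [Fintype W] {G : SimpleGraph V} {H : SimpleGraph W} (e : G ≃g H) :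
    iso G = iso H := by
  unfold iso
  congr 1
  ext k
  constructor
  · rintro ⟨D, rfl, hD⟩
    exact ⟨_, card_map _, hD.map e⟩
  · rintro ⟨D, rfl, hD⟩
    exact ⟨_, card_map _, hD.map e.symm⟩

theorem iso_eq_of_isIsolating [Fintype V] {G : SimpleGraph V} {D : Finset V}
    (hD : IsIsolating G ↑D) (hmin : ∀ D' : Finset V, IsIsolating G ↑D' → #D ≤ #D') :
    iso G = #D :=
  le_antisymm (Nat.sInf_le ⟨D, rfl, hD⟩)
    (le_csInf ⟨_, D, rfl, hD⟩ fun _ ⟨D', h, hD'⟩ => h ▸ hmin D' hD')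

end Isolation

namespace SimpleGraph

section CycleGraph

variable {m : ℕ} [NeZero m]

theorem cycleGraph_adj_iff (hm : 2 ≤ m) {u v : Fin m} :
    (cycleGraph m).Adj u v ↔ v = u + 1 ∨ u = v + 1 := by
  obtain ⟨k, rfl⟩ : ∃ k, m = k + 2 := ⟨m - 2, by omega⟩
  rw [cycleGraph_adj, sub_eq_iff_eq_add, sub_eq_iff_eq_add, add_comm 1 v, add_comm 1 u]
  exact or_comm

theorem cycleGraph_adj_add_one (hm : 2 ≤ m) (u : Fin m) : (cycleGraph m).Adj u (u + 1) :=
  (cycleGraph_adj_iff hm).2 (.inl rfl)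

theorem cycleGraph_adj_natCast_succ (hm : 2 ≤ m) (a : ℕ) :
    (cycleGraph m).Adj (a : Fin m) ((a + 1 : ℕ) : Fin m) := by
  rw [Nat.cast_succ]
  exact cycleGraph_adj_add_one hm _

theorem exists_eq_mk_add_one_of_mem_edgeSet {e : Sym2 (Fin m)}
    (he : e ∈ (cycleGraph m).edgeSet) : ∃ j : Fin m, e = s(j, j + 1) := by
  induction e using Sym2.ind with
  | h u v =>
    rw [mem_edgeSet] at he
    have hm : 2 ≤ m := by
      by_contra hm
      have : Subsingleton (Fin m) := Fin.subsingleton_iff_le_one.2 (by omega)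
      exact he.ne (Subsingleton.elim u v)
    rw [cycleGraph_adj_iff hm] at he
    rcases he with rfl | rfl
    · exact ⟨u, rfl⟩
    · exact ⟨v, Sym2.eq_swap⟩

theorem mk_add_one_injective (hm : 3 ≤ m) :
    Function.Injective fun j : Fin m => s(j, j + 1) := by
  intro i j h
  rcases Sym2.eq_iff.1 h with ⟨hij, -⟩ | ⟨rfl, hji⟩
  · exact hij
  · have h2 : ((2 : Fin m) : ℕ) = 0 := by
      rw [show (2 : Fin m) = 0 by linear_combination hji]; rfl
    rw [Fin.coe_ofNat_eq_mod, Nat.mod_eq_of_lt (by omega)] at h2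
    omega

theorem card_edgeFinset_cycleGraph (hm : 3 ≤ m) : #(cycleGraph m).edgeFinset = m := by
  obtain ⟨k, rfl⟩ : ∃ k, m = k + 3 := ⟨m - 3, by omega⟩
  have := sum_degrees_eq_twice_card_edges (cycleGraph (k + 3))
  simp only [cycleGraph_degree_three_le, sum_const, card_univ, Fintype.card_fin,
    smul_eq_mul] at this
  omega

theorem nonempty_iso_cycleGraph_of_succ {W : Type*} [Fintype W] {H : SimpleGraph W} {N : ℕ}
    [NeZero N] (hN : 2 ≤ N) (hW : Fintype.card W = N) {key : W → ℕ}
    (hkey : Function.Injective key) (succ : W → W)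
    (hsucc : ∀ x, (key x < key (succ x) ∧ ∀ z, key x < key z → key (succ x) ≤ key z) ∨
      ((∀ z, key (succ x) ≤ key z) ∧ ∀ z, key z ≤ key x))
    (hadj : ∀ x y, H.Adj x y ↔ y = succ x ∨ x = succ y) :
    Nonempty (H ≃g cycleGraph N) := by
  let f : W → Fin N := fun x => ⟨keyRank key x, hW ▸ keyRank_lt_card x⟩
  have hf_inj : Function.Injective f := fun x y h => keyRank_injective hkey (Fin.val_eq_of_eq h)
  let e : W ≃ Fin N :=
    .ofBijective f ((Fintype.bijective_iff_injective_and_card f).2 ⟨hf_inj, by simp [hW]⟩)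
  have he : ∀ x, e (succ x) = e x + 1 := by
    intro x
    ext
    simp only [e, Equiv.ofBijective_apply, f, Fin.val_add, Fin.val_one', Nat.mod_eq_of_lt hN]
    rcases hsucc x with ⟨hlt, hgap⟩ | ⟨hmin, hmax⟩
    · have h := keyRank_eq_add_one hkey hlt hgap
      rw [h, Nat.mod_eq_of_lt (by rw [← h, ← hW]; exact keyRank_lt_card _)]
    · rw [keyRank_eq_zero hmin, keyRank_add_one_eq_card hkey hmax, hW, Nat.mod_self]
  refine ⟨⟨e, fun {x y} => ?_⟩⟩
  rw [cycleGraph_adj_iff hN, hadj, ← he, ← he, e.apply_eq_iff_eq, e.apply_eq_iff_eq]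

end CycleGraph

section CycleIsolation

variable {m : ℕ} [NeZero m]

theorem le_four_mul_card_of_isIsolating (hm : 2 ≤ m) {D : Finset (Fin m)}
    (hD : IsIsolating (cycleGraph m) ↑D) : m ≤ 4 * #D := by
  have hcover : univ ⊆ D.biUnion fun d => {d - 2, d - 1, d, d + 1} := by
    intro j _
    rw [mem_biUnion]
    simp only [mem_insert, mem_singleton]
    rcases hD j (j + 1) (cycleGraph_adj_add_one hm j) with ⟨d, hd, hdj⟩ | ⟨d, hd, hdj⟩ <;>
      refine ⟨d, hd, ?_⟩ <;> rw [cycleGraph_adj_iff hm] at hdj <;> grind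
  calc m = #(univ : Finset (Fin m)) := by simp
    _ ≤ #(D.biUnion fun d => {d - 2, d - 1, d, d + 1}) := card_le_card hcover
    _ ≤ ∑ d ∈ D, #{d - 2, d - 1, d, d + 1} := card_biUnion_le
    _ ≤ ∑ _d ∈ D, 4 := sum_le_sum fun _ _ => card_le_four
    _ = 4 * #D := by rw [sum_const, smul_eq_mul, mul_comm]

theorem exists_isIsolating_cycleGraph (hm : 2 ≤ m) :
    ∃ D : Finset (Fin m), #D = (m + 3) / 4 ∧ IsIsolating (cycleGraph m) ↑D := by
  set D := (range ((m + 3) / 4)).image fun i => ((4 * i : ℕ) : Fin m)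
  have hmem : ∀ a ≤ m, 4 ∣ a ∨ a = m → ((a : ℕ) : Fin m) ∈ D := by
    intro a ham ha
    rcases ham.lt_or_eq with ham | rfl
    · exact mem_image.2 ⟨a / 4, mem_range.2 (by omega), by congr 1; omega⟩
    · exact mem_image.2 ⟨0, mem_range.2 (by omega), by simp⟩
  have hcover : ∀ a < m, inClosedNbhd (cycleGraph m) ↑D (a : Fin m) ∨
      inClosedNbhd (cycleGraph m) ↑D ((a + 1 : ℕ) : Fin m) := by
    intro a ha
    have hadj := cycleGraph_adj_natCast_succ hm
    obtain h | h | h | h : a % 4 = 0 ∨ a % 4 = 1 ∨ a % 4 = 2 ∨ a % 4 = 3 := by omega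
    · exact .inl ⟨a, hmem a ha.le (by omega), .inl rfl⟩
    · refine .inl ⟨(a - 1 : ℕ), hmem _ (by omega) (by omega), .inr ?_⟩
      simpa [Nat.sub_add_cancel (by omega : 1 ≤ a)] using hadj (a - 1)
    · rcases Nat.lt_or_ge (a + 1) m with ha' | ha'
      · exact .inr ⟨(a + 2 : ℕ), hmem _ (by omega) (by omega), .inr (hadj (a + 1)).symm⟩
      · exact .inr ⟨(a + 1 : ℕ), hmem _ (by omega) (by omega), .inl rfl⟩
    · exact .inr ⟨(a + 1 : ℕ), hmem _ (by omega) (by omega), .inl rfl⟩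
  refine ⟨D, ?_, ?_⟩
  · rw [card_image_of_injOn, card_range]
    intro i hi j hj hij
    simp only [coe_range, Set.mem_Iio] at hi hj
    have := congrArg Fin.val hij
    rw [Fin.val_cast_of_lt (by omega), Fin.val_cast_of_lt (by omega)] at this
    omega
  · have hcover' : ∀ u : Fin m, inClosedNbhd (cycleGraph m) ↑D u ∨
        inClosedNbhd (cycleGraph m) ↑D (u + 1) := by
      intro u
      simpa using hcover u u.isLt
    intro u v huv
    rcases (cycleGraph_adj_iff hm).1 huv with rfl | rfl
    · exact hcover' u
    · exact (hcover' v).symm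

end CycleIsolation

theorem iso_cycleGraph {m : ℕ} (hm : 2 ≤ m) : iso (cycleGraph m) = (m + 3) / 4 := by
  have : NeZero m := ⟨by omega⟩
  obtain ⟨D, hcard, hD⟩ := exists_isIsolating_cycleGraph hm
  rw [← hcard]
  refine iso_eq_of_isIsolating hD fun D' hD' => ?_
  have := le_four_mul_card_of_isIsolating hm hD'
  omega

section SubdivideCycle

variable {n : ℕ} [NeZero n]

noncomputable def cycleEdgeStart {e : Sym2 (Fin n)} (he : e ∈ (cycleGraph n).edgeSet) : Fin n :=
  (exists_eq_mk_add_one_of_mem_edgeSet he).choose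

theorem mk_cycleEdgeStart {e : Sym2 (Fin n)} (he : e ∈ (cycleGraph n).edgeSet) :
    s(cycleEdgeStart he, cycleEdgeStart he + 1) = e :=
  (exists_eq_mk_add_one_of_mem_edgeSet he).choose_spec.symm

theorem cycleEdgeStart_mk (hn : 3 ≤ n) {u : Fin n} (he : s(u, u + 1) ∈ (cycleGraph n).edgeSet) :
    cycleEdgeStart he = u :=
  mk_add_one_injective hn (mk_cycleEdgeStart he)

variable {A : Finset (Sym2 (Fin n))} (hA : ↑A ⊆ (cycleGraph n).edgeSet)

noncomputable def subdivKey : Fin n ⊕ {e // e ∈ A} → ℕ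
  | .inl u => 2 * u
  | .inr e => 2 * cycleEdgeStart (hA e.2) + 1

noncomputable def subdivSucc : Fin n ⊕ {e // e ∈ A} → Fin n ⊕ {e // e ∈ A}
  | .inl u => if h : s(u, u + 1) ∈ A then .inr ⟨_, h⟩ else .inl (u + 1)
  | .inr e => .inl (cycleEdgeStart (hA e.2) + 1)

theorem subdivKey_injective : Function.Injective (subdivKey hA) := by
  rintro (u | e) (v | e') h <;> simp only [subdivKey] at h
  · exact congrArg Sum.inl (Fin.ext (by omega))
  · omega
  · omega
  · have hstart : cycleEdgeStart (hA e.2) = cycleEdgeStart (hA e'.2) := Fin.ext (by omega)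
    refine congrArg Sum.inr (Subtype.ext ?_)
    rw [← mk_cycleEdgeStart (hA e.2), ← mk_cycleEdgeStart (hA e'.2), hstart]

theorem subdivKey_lt (x : Fin n ⊕ {e // e ∈ A}) : subdivKey hA x < 2 * n := by
  rcases x with u | e
  · simp only [subdivKey]; omega
  · simp only [subdivKey]; omega

theorem mk_mem_of_subdivKey_eq {z : Fin n ⊕ {e // e ∈ A}} {u : Fin n}
    (hz : subdivKey hA z = 2 * u + 1) : s(u, u + 1) ∈ A := by
  rcases z with v | e
  · simp only [subdivKey] at hz; omega
  · simp only [subdivKey] at hz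
    rw [← Fin.ext (by omega : (cycleEdgeStart (hA e.2) : ℕ) = u), mk_cycleEdgeStart]
    exact e.2

theorem subdivKey_subdivSucc (hn : 3 ≤ n) (x : Fin n ⊕ {e // e ∈ A}) :
    (subdivKey hA x < subdivKey hA (subdivSucc hA x) ∧
        ∀ z, subdivKey hA x < subdivKey hA z → subdivKey hA (subdivSucc hA x) ≤ subdivKey hA z) ∨
      ((∀ z, subdivKey hA (subdivSucc hA x) ≤ subdivKey hA z) ∧
        ∀ z, subdivKey hA z ≤ subdivKey hA x) := by
  have hlt := subdivKey_lt hA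
  rcases x with u | e
  · by_cases h : s(u, u + 1) ∈ A
    · have hk : subdivKey hA (subdivSucc hA (.inl u)) = 2 * u + 1 := by
        simp only [subdivSucc, dif_pos h, subdivKey.eq_2, cycleEdgeStart_mk hn]
      simp only [hk, subdivKey.eq_1]
      exact .inl ⟨by omega, fun z hz => by omega⟩
    · have hgap : ∀ z, subdivKey hA z ≠ 2 * u + 1 := fun z hz => h (mk_mem_of_subdivKey_eq hA hz)
      simp only [subdivSucc, dif_neg h, subdivKey.eq_1]
      rcases Fin.val_add_one_eq_or u with hu | ⟨hu, h0⟩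
      · rw [hu]
        exact .inl ⟨by omega, fun z hz => by have := hgap z; omega⟩
      · rw [h0]
        exact .inr ⟨fun z => by simp, fun z => by have := hgap z; have := hlt z; omega⟩
  · simp only [subdivSucc, subdivKey.eq_1, subdivKey.eq_2]
    rcases Fin.val_add_one_eq_or (cycleEdgeStart (hA e.2)) with hb | ⟨hb, h0⟩
    · rw [hb]
      exact .inl ⟨by omega, fun z hz => by omega⟩
    · rw [h0]
      exact .inr ⟨fun z => by simp, fun z => by have := hlt z; omega⟩

theorem subdivide_cycleGraph_adj_inl_inr (hn : 3 ≤ n) (u : Fin n) (e : {e // e ∈ A}) :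
    (subdivide (cycleGraph n) A).Adj (.inl u) (.inr e) ↔
      .inr e = subdivSucc hA (.inl u) ∨ .inl u = subdivSucc hA (.inr e) := by
  have he := mk_cycleEdgeStart (hA e.2)
  change u ∈ e.1 ↔ _
  rw [← he, Sym2.mem_iff]
  simp only [subdivSucc, Sum.inl.injEq]
  refine or_congr ?_ Iff.rfl
  constructor
  · rintro rfl
    rw [dif_pos (he.symm ▸ e.2)]
    exact congrArg Sum.inr (Subtype.ext he.symm)
  · intro h
    split_ifs at h with hu
    exact (mk_add_one_injective hn (he.trans (congrArg Subtype.val (Sum.inr.inj h)))).symm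

theorem subdivide_cycleGraph_adj_iff (hn : 3 ≤ n) (x y : Fin n ⊕ {e // e ∈ A}) :
    (subdivide (cycleGraph n) A).Adj x y ↔ y = subdivSucc hA x ∨ x = subdivSucc hA y := by
  rcases x with u | e <;> rcases y with v | e'
  · change (cycleGraph n).Adj u v ∧ s(u, v) ∉ A ↔ _
    rw [cycleGraph_adj_iff (by omega)]
    by_cases hu : s(u, u + 1) ∈ A <;> by_cases hv : s(v, v + 1) ∈ A <;>
      simp [subdivSucc, hu, hv] <;> grind [Sym2.eq_swap]
  · exact subdivide_cycleGraph_adj_inl_inr hA hn u e'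
  · rw [adj_comm, subdivide_cycleGraph_adj_inl_inr hA hn v e, or_comm]
  · simp [subdivide, subdivSucc]

end SubdivideCycle

theorem nonempty_subdivide_cycleGraph_iso {n : ℕ} [NeZero n] (hn : 3 ≤ n)
    {A : Finset (Sym2 (Fin n))} (hA : ↑A ⊆ (cycleGraph n).edgeSet) :
    Nonempty (subdivide (cycleGraph n) A ≃g cycleGraph (n + #A)) :=
  nonempty_iso_cycleGraph_of_succ (by omega) (by simp) (subdivKey_injective hA) (subdivSucc hA)
    (subdivKey_subdivSucc hA hn) (subdivide_cycleGraph_adj_iff hA hn)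

theorem iso_subdivide_cycleGraph {n : ℕ} (hn : 3 ≤ n) {A : Finset (Sym2 (Fin n))}
    (hA : ↑A ⊆ (cycleGraph n).edgeSet) : iso (subdivide (cycleGraph n) A) = (n + #A + 3) / 4 := by
  have : NeZero n := ⟨by omega⟩
  obtain ⟨e⟩ := nonempty_subdivide_cycleGraph_iso hn hA
  rw [iso_congr e, iso_cycleGraph (by omega)]

theorem sdi_cycleGraph_eq {n r : ℕ} (hn : 3 ≤ n) (hrn : r ≤ n)
    (hr : (n + 3) / 4 < (n + r + 3) / 4) (hmin : ∀ k < r, (n + k + 3) / 4 ≤ (n + 3) / 4) :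
    sdi (cycleGraph n) = r := by
  have : NeZero n := ⟨by omega⟩
  obtain ⟨A, hAE, hAr⟩ := exists_subset_card_eq (s := (cycleGraph n).edgeFinset) (n := r)
    (by rwa [card_edgeFinset_cycleGraph hn])
  have hA : ↑A ⊆ (cycleGraph n).edgeSet := fun e he => mem_edgeFinset.1 (hAE he)
  have hmem : r ∈ {k | ∃ A : Finset (Sym2 (Fin n)), ↑A ⊆ (cycleGraph n).edgeSet ∧ #A = k ∧
      iso (cycleGraph n) < iso (subdivide (cycleGraph n) A)} :=
    ⟨A, hA, hAr, by rwa [iso_cycleGraph (by omega), iso_subdivide_cycleGraph hn hA, hAr]⟩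
  refine le_antisymm (Nat.sInf_le hmem) (le_csInf ⟨r, hmem⟩ ?_)
  rintro k ⟨B, hB, rfl, hlt⟩
  rw [iso_cycleGraph (by omega), iso_subdivide_cycleGraph hn hB] at hlt
  by_contra! hk
  exact (hmin _ hk).not_gt hlt

end SimpleGraph

theorem stmt6 (n : ℕ) (hn : 3 ≤ n) :
    (n % 4 = 0 → sdi (SimpleGraph.cycleGraph n) = 1) ∧
    (n % 4 = 3 → sdi (SimpleGraph.cycleGraph n) = 2) ∧
    (n % 4 = 2 → sdi (SimpleGraph.cycleGraph n) = 3) ∧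
    (n % 4 = 1 → sdi (SimpleGraph.cycleGraph n) = 4) := by
  refine ⟨fun h => ?_, fun h => ?_, fun h => ?_, fun h => ?_⟩ <;>
    exact sdi_cycleGraph_eq hn (by omega) (by omega) fun k hk => by omega
end

section
/- If a graph G has a critical tripartition (A, B, C), then the distance between any two vertices of A ∪ C is even, and every leaf of G belongs to C. -/
open SimpleGraph

/-- `(A, B, C)` is a critical tripartition of `G`. -/
def CriticalTripartition {V : Type*} (G : SimpleGraph V) (A B C : Set V) : Prop :=
  A.Nonempty ∧ B.Nonempty ∧ C.Nonempty ∧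
  (∀ v : V, v ∈ A ∨ v ∈ B ∨ v ∈ C) ∧
  Disjoint A B ∧ Disjoint A C ∧ Disjoint B C ∧
  (∀ u ∈ A ∪ C, ∀ v ∈ A ∪ C, ¬ G.Adj u v) ∧
  (∀ u ∈ B, ∀ v ∈ B, ¬ G.Adj u v) ∧
  {v | ∃ a ∈ A, G.Adj a v} = B ∧
  {v | ∃ c ∈ C, G.Adj c v} = B ∧
  (∀ x ∈ A, ∀ y ∈ A, x ≠ y → ∀ p : G.Walk x y, 3 < p.length) ∧
  (∀ a ∈ A, ¬ ∃! u, G.Adj a u)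

/-
`A ∪ C` and `B` bipartition `G`, so every walk between two vertices of `A ∪ C` has even length.
A vertex of `B` has a neighbour in `A` and a different one in `C`, so it is not a leaf.
-/

namespace SimpleGraph.IsBipartiteWith

variable {V : Type*} {G : SimpleGraph V} {s t : Set V} {u v : V}

theorem even_length_walk (h : G.IsBipartiteWith s t) (hu : u ∈ s) (hv : v ∈ s)
    (p : G.Walk u v) : Even p.length := by
  classical
  let c : G.Coloring Bool := Coloring.mk (fun x ↦ decide (x ∈ t)) fun {x y} hxy ↦ by
    rcases h.mem_of_adj hxy with ⟨hx, hy⟩ | ⟨hx, hy⟩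
    · simp [h.disjoint.notMem_of_mem_left hx, hy]
    · simp [h.disjoint.notMem_of_mem_left hy, hx]
  rw [c.even_length_iff_congr p]
  change decide (u ∈ t) = true ↔ decide (v ∈ t) = true
  simp [h.disjoint.notMem_of_mem_left hu, h.disjoint.notMem_of_mem_left hv]

theorem even_dist (h : G.IsBipartiteWith s t) (hu : u ∈ s) (hv : v ∈ s) :
    Even (G.dist u v) := by
  by_cases hr : G.Reachable u v
  · obtain ⟨p, hp⟩ := hr.exists_walk_length_eq_dist
    exact hp ▸ h.even_length_walk hu hv p
  · exact dist_eq_zero_of_not_reachable hr ▸ Even.zero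

end SimpleGraph.IsBipartiteWith

namespace CriticalTripartition

variable {V : Type*} {G : SimpleGraph V} {A B C : Set V}

theorem isBipartiteWith (h : CriticalTripartition G A B C) : G.IsBipartiteWith (A ∪ C) B := by
  obtain ⟨-, -, -, hcover, hAB, -, hBC, hACindep, hBindep, -⟩ := h
  refine ⟨Set.disjoint_union_left.mpr ⟨hAB, hBC.symm⟩, fun u v huv ↦ ?_⟩
  have hcover' : ∀ x, x ∈ A ∪ C ∨ x ∈ B := fun x ↦ by
    rcases hcover x with hx | hx | hx <;> simp [hx]
  rcases hcover' u with hu | hu <;> rcases hcover' v with hv | hv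
  · exact absurd huv (hACindep u hu v hv)
  · exact Or.inl ⟨hu, hv⟩
  · exact Or.inr ⟨hu, hv⟩
  · exact absurd huv (hBindep u hu v hv)

theorem mem_of_existsUnique_adj (h : CriticalTripartition G A B C) {v : V}
    (hv : ∃! u, G.Adj v u) : v ∈ C := by
  obtain ⟨-, -, -, hcover, -, hAC, -, -, -, hNA, hNC, -, hleaf⟩ := h
  rcases hcover v with hvA | hvB | hvC
  · exact absurd hv (hleaf v hvA)
  · obtain ⟨a, ha, hav⟩ := hNA.symm ▸ hvB
    obtain ⟨c, hc, hcv⟩ := hNC.symm ▸ hvB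
    have hac : a = c := hv.unique hav.symm hcv.symm
    exact absurd (hac ▸ hc) (hAC.notMem_of_mem_left ha)
  · exact hvC

end CriticalTripartition

theorem stmt13 {V : Type*} (G : SimpleGraph V) (A B C : Set V)
    (h : CriticalTripartition G A B C) :
    (∀ u ∈ A ∪ C, ∀ v ∈ A ∪ C, Even (G.dist u v)) ∧
    (∀ v : V, (∃! u, G.Adj v u) → v ∈ C) :=
  ⟨fun u hu v hv ↦ h.isBipartiteWith.even_dist hu hv,
    fun v hv ↦ h.mem_of_existsUnique_adj hv⟩
end

section
/- If G is a connected (ι,1)-critical graph and D is a minimum isolating set of G, then N(D) is an independent set of G. -/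
open SimpleGraph

/-!
Suppose `u, v ∈ N(D)` are adjacent. Subdivide `uv`, or, if `u` (say) lies in `D`, the edge from
`u` to its neighbour in `D`. Both ends of the subdivided edge are still dominated by `D` through
edges that survive the subdivision, so `D` isolates the new graph and the isolation number does
not grow, contradicting criticality.
-/

section Subdivision

variable {V : Type*} (G : SimpleGraph V)

lemma inClosedNbhd_subdivide_of_deleteEdges {A : Finset (Sym2 V)} {D : Finset V} {x : V}
    (hx : inClosedNbhd (G.deleteEdges ↑A) ↑D x) :
    inClosedNbhd (subdivide G A) ↑(D.map .inl : Finset (V ⊕ {e : Sym2 V // e ∈ A})) (.inl x) := by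
  obtain ⟨d, hd, rfl | hdx⟩ := hx
  · exact ⟨.inl d, by simpa using hd, Or.inl rfl⟩
  · exact ⟨.inl d, by simpa using hd, Or.inr ((G.deleteEdges_adj ..).1 hdx)⟩

/-- A subdivision vertex is dominated as soon as one end of its edge is, and an old vertex stays
dominated unless its dominating edge was subdivided. -/
theorem IsIsolating.subdivide_map_inl {A : Finset (Sym2 V)} {D : Finset V}
    (hD : IsIsolating G ↑D)
    (hA : ∀ e ∈ A, ∀ x ∈ e, inClosedNbhd (G.deleteEdges ↑A) ↑D x) :
    IsIsolating (subdivide G A) ↑(D.map .inl : Finset (V ⊕ {e : Sym2 V // e ∈ A})) := by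
  have hcover : ∀ z, inClosedNbhd G ↑D z → inClosedNbhd (G.deleteEdges ↑A) ↑D z := by
    rintro z ⟨d, hd, rfl | hdz⟩
    · exact ⟨d, hd, Or.inl rfl⟩
    by_cases he : s(d, z) ∈ A
    · exact hA _ he z (Sym2.mem_mk_right d z)
    · exact ⟨d, hd, Or.inr ((G.deleteEdges_adj ..).2 ⟨hdz, he⟩)⟩
  rintro (x | ⟨e, he⟩) (y | ⟨e, he⟩) hxy
  · exact (hD x y hxy.1).imp (inClosedNbhd_subdivide_of_deleteEdges G <| hcover x ·)
      (inClosedNbhd_subdivide_of_deleteEdges G <| hcover y ·)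
  · exact Or.inl (inClosedNbhd_subdivide_of_deleteEdges G (hA e he x hxy))
  · exact Or.inr (inClosedNbhd_subdivide_of_deleteEdges G (hA e he y hxy))
  · exact hxy.elim

lemma iso_subdivide_le_card [Fintype V] {A : Finset (Sym2 V)} {D : Finset V}
    (hD : IsIsolating G ↑D)
    (hA : ∀ e ∈ A, ∀ x ∈ e, inClosedNbhd (G.deleteEdges ↑A) ↑D x) :
    iso (subdivide G A) ≤ D.card :=
  Nat.sInf_le ⟨_, Finset.card_map _, IsIsolating.subdivide_map_inl G hD hA⟩

lemma exists_mem_not_inClosedNbhd_deleteEdges [Fintype V] {e : Sym2 V}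
    (hcrit : iso G < iso (subdivide G {e})) {D : Finset V} (hD : IsIsolating G ↑D)
    (hmin : D.card = iso G) :
    ∃ x ∈ e, ¬ inClosedNbhd (G.deleteEdges {e}) ↑D x := by
  by_contra! h
  have := iso_subdivide_le_card G hD (A := {e}) (by simpa using h)
  omega

end Subdivision

theorem stmt16_general {V : Type*} [Fintype V] (G : SimpleGraph V)
    (hcrit : ∀ e ∈ G.edgeSet, iso G < iso (subdivide G {e}))
    (D : Finset V) (hiso : IsIsolating G ↑D) (hmin : D.card = iso G) :
    ∀ u v : V, (∃ d ∈ D, G.Adj d u) → (∃ d ∈ D, G.Adj d v) → ¬ G.Adj u v := by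
  rintro u v ⟨du, hdu, hdu_u⟩ ⟨dv, hdv, hdv_v⟩ huv
  have uncovered {a b : V} (hab : G.Adj a b) :
      ∃ x ∈ s(a, b), ¬ inClosedNbhd (G.deleteEdges {s(a, b)}) ↑D x :=
    exists_mem_not_inClosedNbhd_deleteEdges G (hcrit _ hab) hiso hmin
  have not_both_mem {a b : V} (ha : a ∈ D) (hb : b ∈ D) (hab : G.Adj a b) : False := by
    obtain ⟨x, hx, hcov⟩ := uncovered hab
    rcases Sym2.mem_iff.1 hx with rfl | rfl
    exacts [hcov ⟨x, ha, Or.inl rfl⟩, hcov ⟨x, hb, Or.inl rfl⟩]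
  by_cases hu : u ∈ D
  · exact not_both_mem hdu hu hdu_u
  by_cases hv : v ∈ D
  · exact not_both_mem hdv hv hdv_v
  obtain ⟨x, hx, hcov⟩ := uncovered huv
  rcases Sym2.mem_iff.1 hx with rfl | rfl
  · refine hcov ⟨du, hdu, Or.inr ((G.deleteEdges_adj ..).2 ⟨hdu_u, ?_⟩)⟩
    simp [G.ne_of_adj hdu_u, ne_of_mem_of_not_mem hdu hv]
  · refine hcov ⟨dv, hdv, Or.inr ((G.deleteEdges_adj ..).2 ⟨hdv_v, ?_⟩)⟩
    simp [G.ne_of_adj hdv_v, ne_of_mem_of_not_mem hdv hu]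

theorem stmt16 {V : Type*} [Fintype V] (G : SimpleGraph V) (hconn : G.Connected)
    (hcrit : ∀ e ∈ G.edgeSet, iso G < iso (subdivide G {e}))
    (D : Finset V) (hiso : IsIsolating G ↑D) (hmin : D.card = iso G) :
    ∀ u v : V, (∃ d ∈ D, G.Adj d u) → (∃ d ∈ D, G.Adj d v) → ¬ G.Adj u v :=
  stmt16_general G hcrit D hiso hmin
end

section
/- If G is a connected (ι,1)-critical graph with a minimum isolating set D of size |D| ≥ 2, then for every x ∈ D there exists y ∈ D \ {x} with d_G(x,y) = 4. -/
open SimpleGraph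

/-! If `D` still isolated `G` after subdividing an edge `uw`, criticality would fail; this happens
as soon as both `u` and `w` are covered by `D` through edges other than `uw`. Hence, for every
edge `uw`, a vertex of `D` in `N[u]` and a vertex of `D` in `N[w]` cannot both avoid the edge,
which rules out two vertices of `D` at distance 1, 2 or 3 (look at the middle edge of a geodesic).
If all other vertices of `D` were at distance at least 5 from `x`, the vertices at distance 2
and 3 from `x` on a geodesic towards one of them would span an edge outside `N[D]`. -/

section

variable {V : Type*}

lemma inClosedNbhd_of_mem {G : SimpleGraph V} {D : Set V} {v : V} (hv : v ∈ D) :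
    inClosedNbhd G D v :=
  ⟨v, hv, Or.inl rfl⟩

lemma inClosedNbhd_deleteEdges {G : SimpleGraph V} {D : Set V} {s : Set (Sym2 V)} {v : V}
    (hv : inClosedNbhd G D v) (hs : ∀ e ∈ s, v ∉ e) : inClosedNbhd (G.deleteEdges s) D v := by
  obtain ⟨d, hd, rfl | hadj⟩ := hv
  · exact inClosedNbhd_of_mem hd
  · exact ⟨d, hd, Or.inr (deleteEdges_adj.mpr ⟨hadj, fun h ↦ hs _ h (Sym2.mem_mk_right d v)⟩)⟩

lemma inClosedNbhd_deleteEdges_singleton {G : SimpleGraph V} {D : Set V} {u w d : V}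
    (hd : d ∈ D) (hdu : d = u ∨ G.Adj d u) (hdw : d ≠ w) :
    inClosedNbhd (G.deleteEdges {s(u, w)}) D u := by
  obtain rfl | hadj := hdu
  · exact inClosedNbhd_of_mem hd
  · refine ⟨d, hd, Or.inr (deleteEdges_adj.mpr ⟨hadj, fun h ↦ ?_⟩)⟩
    obtain ⟨rfl, -⟩ | ⟨rfl, -⟩ := Sym2.eq_iff.mp (Set.mem_singleton_iff.mp h)
    · exact hadj.ne rfl
    · exact hdw rfl

section Subdivision

variable {G : SimpleGraph V} {A : Finset (Sym2 V)}

lemma subdivide_adj_inl_inl_s17 {a b : V} :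
    (subdivide G A).Adj (.inl a) (.inl b) ↔ (G.deleteEdges ↑A).Adj a b := by
  rw [deleteEdges_adj]
  rfl

lemma inClosedNbhd_subdivide_inl {D : Set V} {v : V}
    (hv : inClosedNbhd (G.deleteEdges ↑A) D v) :
    inClosedNbhd (subdivide G A) (Sum.inl '' D) (.inl v) := by
  obtain ⟨d, hd, rfl | hadj⟩ := hv
  · exact inClosedNbhd_of_mem ⟨d, hd, rfl⟩
  · exact ⟨.inl d, ⟨d, hd, rfl⟩, Or.inr (subdivide_adj_inl_inl_s17.mpr hadj)⟩

lemma isIsolating_subdivide {D : Set V} (hD : IsIsolating G D)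
    (hA : ∀ e ∈ A, ∀ v ∈ e, inClosedNbhd (G.deleteEdges ↑A) D v) :
    IsIsolating (subdivide G A) (Sum.inl '' D) := by
  have hend : ∀ e : {e // e ∈ A}, ∀ v ∈ (e : Sym2 V),
      inClosedNbhd (subdivide G A) (Sum.inl '' D) (.inl v) := fun e v hv ↦
    inClosedNbhd_subdivide_inl (hA e e.2 v hv)
  have hcov : ∀ v, inClosedNbhd G D v →
      inClosedNbhd (subdivide G A) (Sum.inl '' D) (.inl v) := fun v hv ↦ by
    by_cases! hvA : ∀ e ∈ A, v ∉ e
    · exact inClosedNbhd_subdivide_inl (inClosedNbhd_deleteEdges hv hvA)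
    · obtain ⟨e, he, hve⟩ := hvA
      exact hend ⟨e, he⟩ v hve
  rintro (a | e) (b | f) hab
  · exact (hD a b (deleteEdges_adj.mp (subdivide_adj_inl_inl_s17.mp hab)).1).imp (hcov a) (hcov b)
  · exact .inl (hend f a hab)
  · exact .inr (hend e b hab)
  · exact hab.elim

lemma iso_subdivide_le [Fintype V] {D : Finset V} (hD : IsIsolating G ↑D)
    (hA : ∀ e ∈ A, ∀ v ∈ e, inClosedNbhd (G.deleteEdges ↑A) ↑D v) :
    iso (subdivide G A) ≤ D.card := by
  refine Nat.sInf_le ⟨D.map .inl, Finset.card_map _, ?_⟩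
  rw [Finset.coe_map]
  exact isIsolating_subdivide hD hA

end Subdivision

section Critical

variable [Fintype V] {G : SimpleGraph V} {D : Finset V}

lemma eq_or_eq_of_adj_of_critical (hcrit : ∀ e ∈ G.edgeSet, iso G < iso (subdivide G {e}))
    (hD : IsIsolating G ↑D) (hmin : D.card = iso G) {u w d d' : V} (huw : G.Adj u w)
    (hd : d ∈ D) (hdu : d = u ∨ G.Adj d u) (hd' : d' ∈ D) (hd'w : d' = w ∨ G.Adj d' w) :
    d = w ∨ d' = u := by
  by_contra! hne
  have hle : iso (subdivide G {s(u, w)}) ≤ D.card := by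
    refine iso_subdivide_le hD fun e he v hv ↦ ?_
    rw [Finset.coe_singleton]
    obtain rfl := Finset.mem_singleton.mp he
    obtain rfl | rfl := Sym2.mem_iff.mp hv
    · exact inClosedNbhd_deleteEdges_singleton hd hdu hne.1
    · rw [Sym2.eq_swap]
      exact inClosedNbhd_deleteEdges_singleton hd' hd'w hne.2
  have := hcrit s(u, w) huw
  omega

end Critical

lemma SimpleGraph.Walk.eq_or_adj_of_length_le_one {G : SimpleGraph V} {u v : V}
    (p : G.Walk u v) (hp : p.length ≤ 1) : u = v ∨ G.Adj u v := by
  obtain hp | hp := Nat.le_one_iff_eq_zero_or_eq_one.mp hp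
  · exact .inl (p.eq_of_length_eq_zero hp)
  · exact .inr (p.adj_of_length_eq_one hp)

lemma SimpleGraph.Walk.dist_getVert_of_length_eq_dist {G : SimpleGraph V} {u v : V}
    (p : G.Walk u v) (hp : p.length = G.dist u v) {n : ℕ} (hn : n ≤ p.length) :
    G.dist u (p.getVert n) = n := by
  have hle : G.dist u (p.getVert n) ≤ n := by
    simpa [Walk.take_length, hn] using dist_le (p.take n)
  have hsuffix : G.dist (p.getVert n) v ≤ p.length - n := by
    simpa [Walk.drop_length] using dist_le (p.drop n)
  have := (p.drop n).reachable.dist_triangle_right u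
  omega

section Distance

variable {G : SimpleGraph V}

lemma four_le_dist_of_critical [Fintype V] {D : Finset V}
    (hcrit : ∀ e ∈ G.edgeSet, iso G < iso (subdivide G {e}))
    (hD : IsIsolating G ↑D) (hmin : D.card = iso G) {x y : V} (hx : x ∈ D) (hy : y ∈ D)
    (hxy : x ≠ y) (hr : G.Reachable x y) : 4 ≤ G.dist x y := by
  by_contra! hlt
  obtain ⟨p, hp⟩ := hr.exists_walk_length_eq_dist
  have hpos : 0 < p.length := hp ▸ hr.pos_dist_of_ne hxy
  -- the middle edge of a geodesic of length 1, 2 or 3 has its ends within distance 1 of `x`, `y`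
  set i := p.length - 2
  have hxu := (p.take i).eq_or_adj_of_length_le_one (by simp [Walk.take_length]; omega)
  have hwy := (p.drop (i + 1)).eq_or_adj_of_length_le_one (by simp [Walk.drop_length]; omega)
  have huw := p.adj_getVert_succ (i := i) (by omega)
  obtain h | h := eq_or_eq_of_adj_of_critical hcrit hD hmin huw hx hxu hy
    (hwy.imp Eq.symm Adj.symm)
  · have := p.dist_getVert_of_length_eq_dist hp (n := i + 1) (by omega)
    rw [← h, SimpleGraph.dist_self] at this
    omega
  · have := p.dist_getVert_of_length_eq_dist hp (n := i) (by omega)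
    rw [← h] at this
    omega

lemma not_inClosedNbhd_of_dist_add_two_le (hG : G.Connected) {D : Set V} {x v : V}
    (hv : 2 ≤ G.dist x v) (hfar : ∀ d ∈ D, d ≠ x → G.dist x v + 2 ≤ G.dist x d) :
    ¬ inClosedNbhd G D v := by
  rintro ⟨d, hd, hdv⟩
  have hdv : G.dist v d ≤ 1 := by
    obtain rfl | hadj := hdv
    · simp
    · exact (dist_eq_one_iff_adj.mpr hadj.symm).le
  by_cases hdx : d = x
  · subst hdx
    rw [dist_comm] at hdv
    omega
  · have := hfar d hd hdx
    have := hG.dist_triangle (u := x) (v := v) (w := d)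
    omega

end Distance

end

theorem stmt17 {V : Type*} [Fintype V] (G : SimpleGraph V) (hconn : G.Connected)
    (hcrit : ∀ e ∈ G.edgeSet, iso G < iso (subdivide G {e}))
    (D : Finset V) (hiso : IsIsolating G ↑D) (hmin : D.card = iso G)
    (hD : 2 ≤ D.card) :
    ∀ x ∈ D, ∃ y ∈ D, y ≠ x ∧ G.dist x y = 4 := by
  intro x hx
  by_contra! hne
  have hfar : ∀ y ∈ D, y ≠ x → 5 ≤ G.dist x y := fun y hy hyx ↦
    (four_le_dist_of_critical hcrit hiso hmin hx hy hyx.symm (hconn x y)).lt_of_ne'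
      (hne y hy hyx)
  obtain ⟨y, hy, hyx⟩ := D.exists_mem_ne hD x
  obtain ⟨p, hp⟩ := (hconn x y).exists_walk_length_eq_dist
  have hy5 := hfar y hy hyx
  -- the edge between the vertices at distance 2 and 3 from `x` on a geodesic to `y` is uncovered
  have huncov : ∀ k, 2 ≤ k → k ≤ 3 → ¬ inClosedNbhd G ↑D (p.getVert k) := fun k hk2 hk3 ↦ by
    have hk := p.dist_getVert_of_length_eq_dist hp (n := k) (by omega)
    refine not_inClosedNbhd_of_dist_add_two_le hconn (x := x) (by omega) fun d hd hdx ↦ ?_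
    have := hfar d hd hdx
    omega
  rcases hiso _ _ (p.adj_getVert_succ (i := 2) (by omega)) with h | h
  · exact huncov 2 le_rfl (by norm_num) h
  · exact huncov 3 (by norm_num) le_rfl h
end
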